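/- Let {Y_α}_{α∈A} be a finite family of Bernoulli random variables whose index set A admits a proper cover of size χ, and let X̄ = (1/|A|) Σ_{α∈A} Y_α. Then for every t > 0, P(X̄ ≥ E[X̄] + t) ≤ exp(−2 t² |A| / χ). -/

import Mathlib

/-!
Centred Bernoulli variables are sub-Gaussian with variance proxy `1/4` (Hoeffding's lemma).
Colour every index by one class of the cover containing it. Inside a colour class the variables
are independent, so the class sum has proxy `|B_j|/4`. Across classes nothing is independent, but
Hölder's inequality still makes a sum of sub-Gaussian variables with proxies `c_j` sub-Gaussian with
proxy `(∑ √c_j)²`, which by Cauchy–Schwarz is at most `χ ∑ c_j = χ|A|/4`. The Chernoff bound for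
this proxy at level `|A| t` is `exp (-2 t² |A| / χ)`.
-/

open MeasureTheory ProbabilityTheory Real Finset
open scoped NNReal

namespace ProbabilityTheory.HasSubgaussianMGF

variable {Ω ι : Type*} [MeasurableSpace Ω] {μ : Measure Ω} {X : ι → Ω → ℝ} {c : ι → ℝ≥0}

lemma mono {Y : Ω → ℝ} {c c' : ℝ≥0} (h : HasSubgaussianMGF Y c μ) (hc : c ≤ c') :
    HasSubgaussianMGF Y c' μ where
  integrable_exp_mul := h.integrable_exp_mul
  mgf_le t := (h.mgf_le t).trans <| exp_le_exp.mpr <| by gcongr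

lemma sum [IsZeroOrProbabilityMeasure μ] {s : Finset ι}
    (h : ∀ i ∈ s, HasSubgaussianMGF (X i) (c i) μ) :
    HasSubgaussianMGF (fun ω ↦ ∑ i ∈ s, X i ω) ((∑ i ∈ s, (c i).sqrt) ^ 2) μ := by
  classical
  induction s using Finset.induction_on with
  | empty => simp [fun_zero]
  | insert i s his ih =>
    simp_rw [sum_insert his]
    simpa using (h i (mem_insert_self i s)).add (ih fun j hj ↦ h j (mem_insert_of_mem hj))

lemma sum_card_mul [IsZeroOrProbabilityMeasure μ] {s : Finset ι}
    (h : ∀ i ∈ s, HasSubgaussianMGF (X i) (c i) μ) :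
    HasSubgaussianMGF (fun ω ↦ ∑ i ∈ s, X i ω) (#s * ∑ i ∈ s, c i) μ :=
  (sum h).mono <| by simpa using sq_sum_le_card_mul_sum_sq (s := s) (f := fun i ↦ (c i).sqrt)

lemma sum_of_iIndepFun_on_cover [IsZeroOrProbabilityMeasure μ] [Fintype ι] {χ : ℕ}
    {C : Fin χ → Set ι} (hcover : ⋃ j, C j = Set.univ)
    (hindep : ∀ j, iIndepFun (fun i : C j ↦ X i) μ) (h : ∀ i, HasSubgaussianMGF (X i) (c i) μ) :
    HasSubgaussianMGF (fun ω ↦ ∑ i, X i ω) (χ * ∑ i, c i) μ := by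
  classical
  choose col hcol using fun i ↦ Set.mem_iUnion.mp (hcover ▸ Set.mem_univ i)
  have hclass (j : Fin χ) : HasSubgaussianMGF (fun ω ↦ ∑ i with col i = j, X i ω)
      (∑ i with col i = j, c i) μ := by
    have := sum_of_iIndepFun (hindep j) (c := fun i ↦ c i)
      (s := ({i | col i = j} : Finset ι).subtype (· ∈ C j)) fun i _ ↦ h i
    have hsub : ∀ i ∈ ({i | col i = j} : Finset ι), i ∈ C j := fun i hi ↦ by
      simpa [(mem_filter.mp hi).2] using hcol i
    simp only [sum_subtype_of_mem c hsub] at this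
    exact this.congr (ae_of_all _ fun ω ↦ sum_subtype_of_mem (X · ω) hsub)
  simpa [sum_fiberwise] using sum_card_mul (s := univ) fun j _ ↦ hclass j

end ProbabilityTheory.HasSubgaussianMGF

lemma mul_le_sub_of_div_add_le_div {n a b t : ℝ} (hn : 0 ≤ n) (ht : 0 < t)
    (h : a / n + t ≤ b / n) : n * t ≤ b - a := by
  rcases hn.eq_or_lt with rfl | hn
  · simp only [div_zero, zero_add] at h
    linarith
  · rwa [← le_sub_iff_add_le', ← sub_div, le_div_iff₀ hn, mul_comm] at h

lemma hasSubgaussianMGF_sub_integral_of_bernoulli {Ω : Type*} [MeasurableSpace Ω] {μ : Measure Ω}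
    [IsProbabilityMeasure μ] {X : Ω → ℝ} (hX : AEMeasurable X μ) (h01 : ∀ ω, X ω = 0 ∨ X ω = 1) :
    HasSubgaussianMGF (fun ω ↦ X ω - μ[X]) 4⁻¹ μ := by
  have hIcc : ∀ᵐ ω ∂μ, X ω ∈ Set.Icc (0 : ℝ) 1 := ae_of_all _ fun ω ↦ by
    rcases h01 ω with h | h <;> simp [h]
  convert hasSubgaussianMGF_of_mem_Icc hX hIcc
  norm_num

/-- Chromatic Hoeffding inequality for means of Bernoulli random variables: if the
finite index set `A` admits a proper cover of size `χ`, then the empirical mean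
`X̄ = (1/|A|) ∑ Y α` satisfies `P(X̄ ≥ E X̄ + t) ≤ exp (-2 t² |A| / χ)`. -/
theorem janson_chromatic_hoeffding_bernoulli_mean
    {Ω : Type*} [MeasurableSpace Ω] (μ : Measure Ω) [IsProbabilityMeasure μ]
    {A : Type*} [Fintype A] (Y : A → Ω → ℝ) (hY : ∀ α, Measurable (Y α))
    (hBer : ∀ α ω, Y α ω = 0 ∨ Y α ω = 1)
    (χ : ℕ) (C : Fin χ → Set A) (hcover : (⋃ j, C j) = Set.univ)
    (hindep : ∀ j, iIndepFun
      (fun α : C j => Y (α : A)) μ)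
    (t : ℝ) (ht : 0 < t) :
    (μ {ω | (∫ ω', ((∑ α, Y α ω') / Fintype.card A) ∂μ) + t
        ≤ (∑ α, Y α ω) / Fintype.card A}).toReal ≤
      Real.exp (-2 * t ^ 2 * Fintype.card A / χ) := by
  set n := Fintype.card A with hn_def
  have hS : HasSubgaussianMGF (fun ω ↦ ∑ α, (Y α ω - μ[Y α])) (χ * ∑ _α : A, 4⁻¹) μ :=
    HasSubgaussianMGF.sum_of_iIndepFun_on_cover hcover
      (fun j ↦ (hindep j).comp (fun α x ↦ x - μ[Y α]) fun _ ↦ measurable_sub_const _ :)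
      fun α ↦ hasSubgaussianMGF_sub_integral_of_bernoulli (hY α).aemeasurable (hBer α)
  have hmean : ∫ ω, (∑ α, Y α ω) / n ∂μ = (∑ α, μ[Y α]) / n := by
    rw [integral_div, integral_finsetSum _ fun α _ ↦ ?_]
    exact Integrable.of_mem_Icc 0 1 (hY α).aemeasurable (ae_of_all _ fun ω ↦ by
      rcases hBer α ω with h | h <;> simp [h])
  have hevent : {ω | (∫ ω', ((∑ α, Y α ω') / n) ∂μ) + t ≤ (∑ α, Y α ω) / n}
      ⊆ {ω | n * t ≤ ∑ α, (Y α ω - μ[Y α])} := by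
    intro ω hω
    rw [Set.mem_ofPred_eq, hmean] at hω
    rw [Set.mem_ofPred_eq, sum_sub_distrib]
    exact mul_le_sub_of_div_add_le_div n.cast_nonneg ht hω
  calc μ.real _ ≤ μ.real {ω | n * t ≤ ∑ α, (Y α ω - μ[Y α])} := measureReal_mono hevent
    _ ≤ exp (-(n * t) ^ 2 / (2 * (χ * ∑ _α : A, (4⁻¹ : ℝ≥0)))) := hS.measure_ge_le (by positivity)
    _ = exp (-2 * t ^ 2 * n / χ) := by
      simp only [sum_const, card_univ, ← hn_def, nsmul_eq_mul]
      push_cast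
      congr 1
      rcases eq_or_ne (n : ℝ) 0 with hn | hn
      · simp [hn]
      rcases eq_or_ne (χ : ℝ) 0 with hχ | hχ
      · simp [hχ]
      field_simp
      ring
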